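/- arXiv:1810.00997 — 3 statements merged into one kernel-verified Lean document; each statement's English description precedes it below -/
import Mathlib

section
/- For any positive integer n, with h_max = floor(n / H_n) where H_n is the n-th harmonic number, we have 1 + sum_{h=1}^{h_max} floor(h_max / h) <= n + 1. -/
/-- With `hmax = ⌊n / H_n⌋` where `H_n` is the n-th harmonic number,
`1 + ∑_{h=1}^{hmax} ⌊hmax / h⌋ ≤ n + 1`. -/
theorem sequool_budget (n : ℕ) (hn : 0 < n)
    (H : ℝ) (hH : H = ∑ t ∈ Finset.range n, (1 : ℝ) / (t + 1))
    (hmax : ℕ) (hhmax : hmax = ⌊(n : ℝ) / H⌋₊) :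
    1 + ∑ h ∈ Finset.Icc 1 hmax, hmax / h ≤ n + 1 := by
  have hH1 : (1 : ℝ) ≤ H := by
    rw [hH]
    calc (1 : ℝ) = 1 / ((0 : ℕ) + 1) := by norm_num
    _ ≤ _ := Finset.single_le_sum (f := fun t : ℕ => (1 : ℝ) / (t + 1))
        (fun i _ => by positivity) (Finset.mem_range.mpr hn)
  have hHpos : (0 : ℝ) < H := lt_of_lt_of_le one_pos hH1
  have hmH : (hmax : ℝ) * H ≤ n := by
    have h1 : (hmax : ℝ) ≤ (n : ℝ) / H := by
      rw [hhmax]; exact Nat.floor_le (by positivity)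
    calc (hmax : ℝ) * H ≤ ((n : ℝ) / H) * H := by nlinarith
    _ = n := by field_simp
  have hmn : hmax ≤ n := by
    rw [hhmax]
    calc ⌊(n : ℝ) / H⌋₊ ≤ ⌊(n : ℝ)⌋₊ :=
      Nat.floor_le_floor (div_le_self (by positivity) hH1)
    _ = n := Nat.floor_natCast n
  suffices h : ∑ h ∈ Finset.Icc 1 hmax, hmax / h ≤ n by omega
  have hIcc : ∑ h ∈ Finset.Icc 1 hmax, (1 : ℝ) / h ≤ H := by
    have he : ∑ h ∈ Finset.Icc 1 hmax, (1 : ℝ) / h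
        = ∑ t ∈ Finset.range hmax, (1 : ℝ) / (t + 1) := by
      rw [← Finset.Ico_add_one_right_eq_Icc, Finset.sum_Ico_eq_sum_range]
      simp [add_comm]
    rw [he, hH]
    exact Finset.sum_le_sum_of_subset_of_nonneg (Finset.range_subset_range.mpr hmn)
      (fun i _ _ => by positivity)
  have key : ((∑ h ∈ Finset.Icc 1 hmax, hmax / h : ℕ) : ℝ) ≤ n := by
    push_cast
    calc ∑ h ∈ Finset.Icc 1 hmax, ((hmax / h : ℕ) : ℝ)
        ≤ ∑ h ∈ Finset.Icc 1 hmax, (hmax : ℝ) / h :=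
          Finset.sum_le_sum fun i _ => Nat.cast_div_le
      _ = (hmax : ℝ) * ∑ h ∈ Finset.Icc 1 hmax, (1 : ℝ) / h := by
          rw [Finset.mul_sum]; exact Finset.sum_congr rfl fun i _ => by ring
      _ ≤ (hmax : ℝ) * H := by
          apply mul_le_mul_of_nonneg_left hIcc (by positivity)
      _ ≤ n := hmH
  exact_mod_cast key
end

section
/- For real x >= e, the principal branch of the Lambert W function satisfies W(x) >= log(x / log x). -/
/-- Hoorfar–Hassani: for `x ≥ e`, the principal Lambert W value `w`
(the unique `w ≥ 0` with `w * e^w = x`) satisfies `w ≥ log (x / log x)`. -/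
theorem lambertW_ge (x w : ℝ) (hx : Real.exp 1 ≤ x) (hw : 0 ≤ w)
    (hwx : w * Real.exp w = x) :
    Real.log (x / Real.log x) ≤ w := by
  have hw1 : 1 ≤ w := by
    by_contra h
    push_neg at h
    have : w * Real.exp w < 1 * Real.exp 1 := by
      apply mul_lt_mul' h.le (Real.exp_lt_exp.mpr h) (Real.exp_pos w).le one_pos
    rw [one_mul, hwx] at this
    linarith
  have hwpos : 0 < w := lt_of_lt_of_le one_pos hw1
  have hlogw : 0 ≤ Real.log w := Real.log_nonneg hw1
  have hlogx : Real.log x = w + Real.log w := by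
    rw [← hwx, Real.log_mul (ne_of_gt hwpos) (Real.exp_ne_zero w), Real.log_exp]
    ring
  have hlogxpos : 0 < Real.log x := by rw [hlogx]; linarith
  have hxpos : 0 < x := lt_of_lt_of_le (Real.exp_pos 1) hx
  rw [Real.log_div (ne_of_gt hxpos) (ne_of_gt hlogxpos), hlogx]
  have : Real.log w ≤ Real.log (w + Real.log w) := by
    apply Real.log_le_log hwpos; linarith
  linarith
end

section
/- Consider a hierarchical partition of a space X with cells P_{h,i}, a function f: X -> R with global optimum x* attained, satisfying: for all h, all x in the cell of depth h containing x*, f(x) >= f(x*) - nu * rho^h, for some nu > 0, rho in (0,1). Suppose a sequential algorithm at each depth h in [1, h_max] opens the floor(h_max/h) cells of depth h with largest values f(x_{h,i}) among cells whose parents were opened, starting from the root. If for some h in [1, h_max], for all h' <= h, the number N_{h'} of cells at depth h' containing a point with value >= f(x*) - 3*nu*rho^{h'} satisfies N_{h'} <= floor(h_max/h), then the cell of depth h containing x* is opened by the end of round h. -/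
/-- Lemma 1 for SequOOL, abstracted. Cells at each depth are indexed by `ι`;
`istar h` is the optimal cell of depth `h` (containing `x*`), `v h i` is the evaluated value
`f(x_{h,i})` of cell `i` at depth `h`, `fstar = f(x*)`, `opened h` is the set of cells opened
by the algorithm at depth `h`, and `N h` is the set of `3 ν ρ^h`-near-optimal cells of depth
`h` (containing every cell whose value is at least `fstar - 3 ν ρ^h`).
The algorithm opens, at each depth `h' ∈ [1, hmax]`, the `⌊hmax / h'⌋` cells of depth `h'`
with largest values: so, whenever the optimal parent was opened, either the optimal cell of
depth `h'` is opened, or `⌊hmax / h'⌋` cells, all with value at least that of the optimal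
cell, are opened instead of it.
If for all `h' ≤ h` the number of near-optimal cells at depth `h'` is at most `⌊hmax / h⌋`,
then the optimal cell of depth `h` is opened by the end of round `h`. -/
theorem sequool_opt_opened {ι : Type*} (fstar nu rho : ℝ)
    (hnu : 0 < nu) (hrho : rho ∈ Set.Ioo (0 : ℝ) 1)
    (hmax h : ℕ) (h1 : 1 ≤ h) (h2 : h ≤ hmax)
    (opened N : ℕ → Finset ι) (istar : ℕ → ι) (v : ℕ → ι → ℝ)
    (hsmooth : ∀ h', fstar - nu * rho ^ h' ≤ v h' (istar h'))
    (hNmem : ∀ h' i, fstar - 3 * nu * rho ^ h' ≤ v h' i → i ∈ N h')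
    (hNcard : ∀ h', h' ≤ h → (N h').card ≤ hmax / h)
    (hroot : istar 0 ∈ opened 0)
    (halg : ∀ h', 1 ≤ h' → h' ≤ hmax → istar (h' - 1) ∈ opened (h' - 1) →
      istar h' ∈ opened h' ∨
        (istar h' ∉ opened h' ∧ (opened h').card = hmax / h' ∧
          ∀ i ∈ opened h', v h' (istar h') ≤ v h' i)) :
    istar h ∈ opened h := by
  suffices H : ∀ h', h' ≤ h → istar h' ∈ opened h' from H h le_rfl
  intro h' hh'
  induction h' with
  | zero => exact hroot
  | succ k ih =>
    have ihk : istar k ∈ opened k := ih (Nat.le_of_succ_le hh')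
    have hk1 : 1 ≤ k + 1 := Nat.succ_le_succ (Nat.zero_le k)
    have hkmax : k + 1 ≤ hmax := le_trans hh' h2
    rcases halg (k + 1) hk1 hkmax (by simpa using ihk) with hgood | ⟨hnot, hcard, hall⟩
    · exact hgood
    · exfalso
      classical
      have hpow : 0 < rho ^ (k + 1) := pow_pos hrho.1 _
      have hvstar : fstar - 3 * nu * rho ^ (k + 1) ≤ v (k + 1) (istar (k + 1)) := by
        have := hsmooth (k + 1)
        nlinarith
      have hsub : opened (k + 1) ⊆ N (k + 1) := by
        intro i hi
        exact hNmem (k + 1) i (le_trans hvstar (hall i hi))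
      have hsub2 : insert (istar (k + 1)) (opened (k + 1)) ⊆ N (k + 1) := by
        intro i hi
        rcases Finset.mem_insert.mp hi with rfl | hi
        · exact hNmem _ _ hvstar
        · exact hsub hi
      have hc : (opened (k + 1)).card + 1 ≤ (N (k + 1)).card := by
        have := Finset.card_le_card hsub2
        rwa [Finset.card_insert_of_notMem hnot] at this
      have hdiv : hmax / h ≤ hmax / (k + 1) :=
        Nat.div_le_div_left hh' (Nat.lt_of_lt_of_le Nat.zero_lt_one hk1)
      have := hNcard (k + 1) hh'
      omega
end
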